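/- arXiv:math-ph/0608024 — 2 statements merged into one kernel-verified Lean document; each statement's English description precedes it below -/
import Mathlib

section
/- Let g : ℝⁿ → Mₙ(ℝ) be a smooth map whose value g(x) = (g_{ab}(x)) is a symmetric matrix at each x, and set 𝓛(x,y) = ∑_{a,b} g_{ab}(x) yᵃ yᵇ. Then for every (x,y) and every index j one has the identity (1/2) ( ∑_k yᵏ ∂²𝓛/∂yʲ∂xᵏ (x,y) − ∂𝓛/∂xʲ(x,y) ) = ∑_{k,l,m} g_{jk}(x) γᵏ_{lm}(x) yˡ yᵐ, where γᵏ_{lm}(x) = (1/2) ∑_h g^{kh}(x) ( ∂_m g_{lh}(x) + ∂_l g_{mh}(x) − ∂_h g_{lm}(x) ) are the Christoffel symbols of g (assuming g(x) is invertible with inverse (g^{kh}(x)) at the given x, ∂_m denoting ∂/∂xᵐ). -/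
/-!
Since `𝓛` is quadratic in `y`, `∂𝓛/∂yʲ = ∑ₐ (g_{aj} + g_{ja}) yᵃ` is linear in `y`, and all the
derivatives on the left are computed termwise from `∂_k g_{ab}`. On the right,
`g_{jk} g^{kh} = δ_j^h` collapses the sum to the Christoffel symbols of the first kind,
`(1/2) ∑_{l,m} (∂_m g_{lj} + ∂_l g_{mj} − ∂_j g_{lm}) yˡ yᵐ`. Both sides then agree because
`∂_k g_{ab}` is symmetric in `a, b` and `yˡ yᵐ` is symmetric in `l, m`.
-/

open scoped BigOperators

/-- Partial derivative of `L` with respect to the base coordinate `xʲ` at `(x, y)`. -/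
noncomputable def pdx {n : ℕ} (L : (Fin n → ℝ) → (Fin n → ℝ) → ℝ) (j : Fin n)
    (x y : Fin n → ℝ) : ℝ :=
  fderiv ℝ (fun x' => L x' y) x (Pi.single j 1)

/-- Partial derivative of `L` with respect to the fiber coordinate `yʲ` at `(x, y)`. -/
noncomputable def pdy {n : ℕ} (L : (Fin n → ℝ) → (Fin n → ℝ) → ℝ) (j : Fin n)
    (x y : Fin n → ℝ) : ℝ :=
  fderiv ℝ (fun y' => L x y') y (Pi.single j 1)

/-- Mixed second partial derivative `∂²L/∂yʲ∂xᵏ` at `(x, y)`. -/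
noncomputable def pdydx {n : ℕ} (L : (Fin n → ℝ) → (Fin n → ℝ) → ℝ) (j k : Fin n)
    (x y : Fin n → ℝ) : ℝ :=
  fderiv ℝ (fun x' => pdy L j x' y) x (Pi.single k 1)

/-- Partial derivative `∂_m g_{lh}` of the metric coefficient `g_{lh}` at `x`. -/
noncomputable def pdg {n : ℕ} (g : (Fin n → ℝ) → Matrix (Fin n) (Fin n) ℝ)
    (m l h : Fin n) (x : Fin n → ℝ) : ℝ :=
  fderiv ℝ (fun x' => g x' l h) x (Pi.single m 1)

theorem fderiv_quadraticForm_apply_single {ι : Type*} [Fintype ι] [DecidableEq ι]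
    (c : Matrix ι ι ℝ) (y : ι → ℝ) (j : ι) :
    fderiv ℝ (fun y' : ι → ℝ => ∑ a, ∑ b, c a b * y' a * y' b) y (Pi.single j 1)
      = ∑ a, (c a j + c j a) * y a := by
  have hQ : HasFDerivAt (fun y' : ι → ℝ => ∑ a, ∑ b, c a b * y' a * y' b)
      (∑ a, ∑ b, c a b • (y a • (ContinuousLinearMap.proj b : (ι → ℝ) →L[ℝ] ℝ)
        + y b • (ContinuousLinearMap.proj a : (ι → ℝ) →L[ℝ] ℝ)))
      y := by
    refine HasFDerivAt.fun_sum fun a _ => HasFDerivAt.fun_sum fun b _ => ?_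
    simp_rw [mul_assoc]
    exact ((hasFDerivAt_apply a y).mul (hasFDerivAt_apply b y)).const_mul (c a b)
  rw [hQ.fderiv]
  simp [Pi.single_apply, Finset.sum_add_distrib, mul_add, mul_comm]

theorem Matrix.sum_mul_sum_mul_of_mul_eq_one {ι R : Type*} [Fintype ι] [DecidableEq ι]
    [CommRing R] {G G' : Matrix ι ι R} (h : G * G' = 1) (v : ι → R) (j : ι) :
    ∑ k, G j k * ∑ h, G' k h * v h = v j := by
  have := congrFun (Matrix.mulVec_mulVec v G G') j
  rwa [h, Matrix.one_mulVec] at this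

theorem sum_mul_mul_sum_mul_of_mul_eq_one {ι R : Type*} [Fintype ι] [DecidableEq ι]
    [CommRing R] {G G' : Matrix ι ι R} (h : G * G' = 1) (c : R) (P : ι → ι → ι → R)
    (y : ι → R) (j : ι) :
    ∑ k, ∑ l, ∑ m, G j k * (c * ∑ h, G' k h * P l m h) * y l * y m
      = c * ∑ l, ∑ m, P l m j * y l * y m := by
  rw [Finset.sum_comm, Finset.mul_sum]
  refine Finset.sum_congr rfl fun l _ => ?_
  rw [Finset.sum_comm, Finset.mul_sum]
  refine Finset.sum_congr rfl fun m _ => ?_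
  rw [← Matrix.sum_mul_sum_mul_of_mul_eq_one h (P l m) j, Finset.sum_mul, Finset.sum_mul,
    Finset.mul_sum]
  exact Finset.sum_congr rfl fun k _ => by ring

theorem sum_mul_sum_sub_sum_sum_eq_christoffelFirstKind {ι R : Type*} [Fintype ι]
    [CommRing R] (D : ι → ι → ι → R) (hD : ∀ m l h, D m l h = D m h l) (y : ι → R) (j : ι) :
    ∑ k, y k * ∑ a, (D k a j + D k j a) * y a - ∑ a, ∑ b, D j a b * y a * y b
      = ∑ l, ∑ m, (D m l j + D l m j - D j l m) * y l * y m := by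
  have hswap : ∑ l, ∑ m, D m l j * y l * y m = ∑ l, ∑ m, D l m j * y l * y m := by
    rw [Finset.sum_comm]
    exact Finset.sum_congr rfl fun l _ => Finset.sum_congr rfl fun m _ => by ring
  have hterm : ∀ k a, y k * (D k a j * y a) = D k a j * y k * y a := fun _ _ => by ring
  simp only [Finset.mul_sum, mul_add, add_mul, sub_mul, Finset.sum_add_distrib,
    Finset.sum_sub_distrib, hswap, fun m h => hD m j h, hterm]

section QuadraticLagrangian

variable {n : ℕ} {g : (Fin n → ℝ) → Matrix (Fin n) (Fin n) ℝ}
  {L : (Fin n → ℝ) → (Fin n → ℝ) → ℝ}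

theorem pdy_eq_of_eq_quadraticForm (hL : ∀ x y, L x y = ∑ a, ∑ b, g x a b * y a * y b)
    (j : Fin n) (x y : Fin n → ℝ) :
    pdy L j x y = ∑ a, (g x a j + g x j a) * y a := by
  simp only [pdy, hL, fderiv_quadraticForm_apply_single]

theorem pdydx_eq_of_eq_quadraticForm (hL : ∀ x y, L x y = ∑ a, ∑ b, g x a b * y a * y b)
    {x : Fin n → ℝ} (hg : ∀ a b, DifferentiableAt ℝ (fun x' => g x' a b) x) (j k : Fin n)
    (y : Fin n → ℝ) :
    pdydx L j k x y = ∑ a, (pdg g k a j x + pdg g k j a x) * y a := by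
  have hD : HasFDerivAt (fun x' => pdy L j x' y)
      (∑ a, y a • (fderiv ℝ (fun x' => g x' a j) x + fderiv ℝ (fun x' => g x' j a) x)) x := by
    simp only [pdy_eq_of_eq_quadraticForm hL]
    exact HasFDerivAt.fun_sum fun a _ =>
      ((hg a j).hasFDerivAt.add (hg j a).hasFDerivAt).mul_const _
  simp [pdydx, hD.fderiv, pdg, mul_add, mul_comm]

theorem pdx_eq_of_eq_quadraticForm (hL : ∀ x y, L x y = ∑ a, ∑ b, g x a b * y a * y b)
    {x : Fin n → ℝ} (hg : ∀ a b, DifferentiableAt ℝ (fun x' => g x' a b) x) (j : Fin n)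
    (y : Fin n → ℝ) :
    pdx L j x y = ∑ a, ∑ b, pdg g j a b x * y a * y b := by
  have hD : HasFDerivAt (fun x' => L x' y)
      (∑ a, ∑ b, (y a * y b) • fderiv ℝ (fun x' => g x' a b) x) x := by
    simp only [hL, mul_assoc]
    exact HasFDerivAt.fun_sum fun a _ => HasFDerivAt.fun_sum fun b _ =>
      (hg a b).hasFDerivAt.mul_const _
  simp [pdx, hD.fderiv, pdg, mul_comm, mul_assoc, mul_left_comm]

theorem pdg_comm_of_isSymm (hsymm : ∀ x, (g x).IsSymm) (m l h : Fin n) (x : Fin n → ℝ) :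
    pdg g m l h x = pdg g m h l x := by
  simp only [pdg, fun x' => (hsymm x').apply l h]

end QuadraticLagrangian

/-- For a smooth symmetric-matrix-valued map `g` and the energy Lagrangian
`𝓛(x,y) = ∑ g_{ab}(x) yᵃ yᵇ`, one has, at any point where `g(x)` is invertible with inverse
`g^{kh}`, the identity
`(1/2)(∑_k yᵏ ∂²𝓛/∂yʲ∂xᵏ − ∂𝓛/∂xʲ) = ∑_{k,l,m} g_{jk} γᵏ_{lm} yˡ yᵐ`,
where `γᵏ_{lm} = (1/2) ∑_h g^{kh} (∂_m g_{lh} + ∂_l g_{mh} − ∂_h g_{lm})` are the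
Christoffel symbols of `g`. -/
theorem statement1 (n : ℕ) (g : (Fin n → ℝ) → Matrix (Fin n) (Fin n) ℝ)
    (hg : ∀ a b : Fin n, ContDiff ℝ (⊤ : ℕ∞) (fun x => g x a b))
    (hsymm : ∀ x, (g x).IsSymm)
    (L : (Fin n → ℝ) → (Fin n → ℝ) → ℝ)
    (hLdef : ∀ x y, L x y = ∑ a, ∑ b, g x a b * y a * y b)
    (x y : Fin n → ℝ) (j : Fin n)
    (ginv : Matrix (Fin n) (Fin n) ℝ)
    (hinv : g x * ginv = 1 ∧ ginv * g x = 1) :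
    (1 / 2) * ((∑ k, y k * pdydx L j k x y) - pdx L j x y)
      = ∑ k, ∑ l, ∑ m, g x j k *
          ((1 / 2) * ∑ h, ginv k h * (pdg g m l h x + pdg g l m h x - pdg g h l m x))
            * y l * y m := by
  have hdiff : ∀ a b, DifferentiableAt ℝ (fun x' => g x' a b) x := fun a b =>
    ((hg a b).differentiable (by simp)).differentiableAt
  rw [sum_mul_mul_sum_mul_of_mul_eq_one hinv.1, pdx_eq_of_eq_quadraticForm hLdef hdiff]
  simp only [pdydx_eq_of_eq_quadraticForm hLdef hdiff]
  rw [sum_mul_sum_sub_sum_sum_eq_christoffelFirstKind _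
    (fun m l h => pdg_comm_of_isSymm hsymm m l h x)]
end

section
/- Let k ≥ 1 and let v⃗ : ℝ → ℝᵏ be a three-times differentiable function of the arclength l. Define ϖ⃗ := v⃗″ + (1/2)|v⃗|² v⃗ (the image of v⃗′ under the sympletic operator 𝓙) and the matrix-valued function M := v⃗ ⊗ v⃗′ − v⃗′ ⊗ v⃗, where (a⃗ ⊗ b⃗)_{ij} = aᵢbⱼ. Then: (i) M′ = v⃗ ⊗ ϖ⃗ − ϖ⃗ ⊗ v⃗, so that M is an explicit antiderivative realizing the nonlocal term D⁻¹(v⃗ ∧ ϖ⃗) of the cosympletic operator; and (ii) ϖ⃗′ + v⃗⌋M = v⃗‴ + (3/2)|v⃗|² v⃗′, where (v⃗⌋M)ⱼ = ∑ᵢ vᵢ Mᵢⱼ. Hence the recursion operator 𝓡 = 𝓗 ∘ 𝓙 applied to v⃗′ yields the vector mKdV flow v⃗‴ + (3/2)|v⃗|² v⃗′. -/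
/-!
Writing `a ∧ b` for the matrix `aᵢbⱼ - bᵢaⱼ`, we have `M = v ∧ v′`, so by the product rule
`M′ = v′ ∧ v′ + v ∧ v″ = v ∧ v″`, and `v ∧ ϖ = v ∧ v″` because `ϖ - v″` is a multiple of `v`.
For (ii), contracting with `v` gives `v⌋(v ∧ v′) = |v|² v′ - (v · v′) v`, and the term
`-(v · v′) v` cancels the one produced by differentiating `(1/2)|v|²` in `ϖ`.
-/

open Finset

section Wedge

variable {ι R : Type*}

def wedge [Mul R] [Sub R] (a b : ι → R) : ι → ι → R := fun i j => a i * b j - b i * a j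

@[simp]
theorem wedge_self [CommRing R] (a : ι → R) : wedge a a = 0 := by
  ext i j
  simp [wedge]

theorem wedge_add_smul_self_right [CommRing R] (a b : ι → R) (c : R) :
    wedge a (b + c • a) = wedge a b := by
  ext i j
  simp only [wedge, Pi.add_apply, Pi.smul_apply, smul_eq_mul]
  ring

theorem sum_mul_wedge_apply [CommRing R] [Fintype ι] (a b : ι → R) (j : ι) :
    ∑ i, a i * wedge a b i j = (∑ i, a i ^ 2) * b j - (∑ i, a i * b i) * a j := by
  simp only [wedge, sum_mul, ← sum_sub_distrib]
  exact sum_congr rfl fun i _ => by ring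

end Wedge

section Derivatives

variable {𝕜 ι : Type*} [NontriviallyNormedField 𝕜] [Fintype ι] {u w : 𝕜 → ι → 𝕜}
  {u' w' : ι → 𝕜} {x : 𝕜}

theorem HasDerivAt.wedge (hu : HasDerivAt u u' x) (hw : HasDerivAt w w' x) :
    HasDerivAt (fun y => wedge (u y) (w y)) (wedge u' (w x) + wedge (u x) w') x := by
  refine hasDerivAt_pi.mpr fun i => hasDerivAt_pi.mpr fun j => ?_
  have hui := hasDerivAt_pi.mp hu
  have hwi := hasDerivAt_pi.mp hw
  refine (((hui i).fun_mul (hwi j)).fun_sub ((hwi i).fun_mul (hui j))).congr_deriv ?_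
  simp only [_root_.wedge, Pi.add_apply]
  ring

theorem HasDerivAt.sum_sq (hu : HasDerivAt u u' x) :
    HasDerivAt (fun y => ∑ i, u y i ^ 2) (2 * ∑ i, u x i * u' i) x := by
  rw [mul_sum]
  refine HasDerivAt.fun_sum fun i _ => ?_
  refine ((hasDerivAt_pi.mp hu i).fun_pow 2).congr_deriv ?_
  norm_num
  ring

end Derivatives

theorem statement19_general (k : ℕ) (v : ℝ → Fin k → ℝ)
    (hv : Differentiable ℝ v) (hv' : Differentiable ℝ (deriv v))
    (hv'' : Differentiable ℝ (deriv (deriv v))) :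
    ∀ ϖ : ℝ → Fin k → ℝ,
      (∀ l, ϖ l = deriv (deriv v) l + ((1 / 2) * ∑ i, v l i ^ 2) • v l) →
    ∀ M : ℝ → Fin k → Fin k → ℝ,
      (∀ l, M l = fun i j => v l i * deriv v l j - deriv v l i * v l j) →
    (∀ l, deriv M l = fun i j => v l i * ϖ l j - ϖ l i * v l j)
    ∧ (∀ l (j : Fin k), deriv ϖ l j + ∑ i, v l i * M l i j
        = deriv (deriv (deriv v)) l j + (3 / 2) * (∑ i, v l i ^ 2) * deriv v l j) := by
  intro ϖ hϖ M hM
  obtain rfl : M = fun l => wedge (v l) (deriv v l) := funext hM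
  obtain rfl : ϖ = fun l => deriv (deriv v) l + ((1 / 2) * ∑ i, v l i ^ 2) • v l := funext hϖ
  refine ⟨fun l => ?_, fun l j => ?_⟩
  · have hM' := (hv l).hasDerivAt.wedge (hv' l).hasDerivAt
    rw [hM'.deriv, wedge_self, zero_add]
    exact (wedge_add_smul_self_right _ _ _).symm
  · have hϖ' := (hv'' l).hasDerivAt.fun_add
      ((((hv l).hasDerivAt.sum_sq).const_mul (1 / 2 : ℝ)).fun_smul (hv l).hasDerivAt)
    rw [hϖ'.deriv, sum_mul_wedge_apply]
    simp only [Pi.add_apply, Pi.smul_apply, smul_eq_mul]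
    ring

/-- Let `v⃗ : ℝ → ℝᵏ` be three-times differentiable in the arclength
`l`, let `ϖ⃗ := v⃗″ + (1/2)|v⃗|² v⃗` (the image of `v⃗′` under the sympletic operator
`𝓙`), and let `M := v⃗ ⊗ v⃗′ − v⃗′ ⊗ v⃗`.  Then
(i) `M′ = v⃗ ⊗ ϖ⃗ − ϖ⃗ ⊗ v⃗`, so `M` is an explicit antiderivative realizing the
nonlocal term `D⁻¹(v⃗ ∧ ϖ⃗)` of the cosympletic operator; and
(ii) `ϖ⃗′ + v⃗⌋M = v⃗‴ + (3/2)|v⃗|² v⃗′`, where `(v⃗⌋M)ⱼ = ∑ᵢ vᵢ Mᵢⱼ`.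
Hence the recursion operator `𝓡 = 𝓗 ∘ 𝓙` applied to `v⃗′` yields the vector mKdV flow. -/
theorem statement19 (k : ℕ) (hk : 1 ≤ k) (v : ℝ → Fin k → ℝ)
    (hv : Differentiable ℝ v) (hv' : Differentiable ℝ (deriv v))
    (hv'' : Differentiable ℝ (deriv (deriv v))) :
    ∀ ϖ : ℝ → Fin k → ℝ,
      (∀ l, ϖ l = deriv (deriv v) l + ((1 / 2) * ∑ i, v l i ^ 2) • v l) →
    ∀ M : ℝ → Fin k → Fin k → ℝ,
      (∀ l, M l = fun i j => v l i * deriv v l j - deriv v l i * v l j) →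
    (∀ l, deriv M l = fun i j => v l i * ϖ l j - ϖ l i * v l j)
    ∧ (∀ l (j : Fin k), deriv ϖ l j + ∑ i, v l i * M l i j
        = deriv (deriv (deriv v)) l j + (3 / 2) * (∑ i, v l i ^ 2) * deriv v l j) :=
  statement19_general k v hv hv' hv''
end
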